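/- arXiv:1603.06603 — 2 statements merged into one kernel-verified Lean document; each statement's English description precedes it below -/
import Mathlib

section
/- In Cliff(4), setting a₋ = ½(wx−yz), b₋ = ½(wy−zx), c₋ = ½(wz−xy), one has a₋² = b₋² = c₋² = ½(−θ−1), where θ = wxyz. -/
noncomputable section
open CliffordAlgebra
/-- The negative-definite quadratic form on ℝⁿ. -/
abbrev Qneg (n : ℕ) : QuadraticForm ℝ (Fin n → ℝ) :=
  QuadraticMap.weightedSumSquares ℝ (fun _ : Fin n => (-1 : ℝ))
/-- Cliff(n), the real Clifford algebra of the negative-definite form on ℝⁿ. -/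
abbrev Cl (n : ℕ) := CliffordAlgebra (Qneg n)
/-- The standard anticommuting generators, each squaring to −1. -/
def e {n : ℕ} (i : Fin n) : Cl n := ι (Qneg n) (Pi.single i 1)
def w : Cl 4 := e 0
def x : Cl 4 := e 1
def y : Cl 4 := e 2
def z : Cl 4 := e 3
def θ : Cl 4 := w * x * y * z
def ap : Cl 4 := (2:ℝ)⁻¹ • (w * x + y * z)
def bp : Cl 4 := (2:ℝ)⁻¹ • (w * y + z * x)
def cp : Cl 4 := (2:ℝ)⁻¹ • (w * z + x * y)
def am : Cl 4 := (2:ℝ)⁻¹ • (w * x - y * z)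
def bm : Cl 4 := (2:ℝ)⁻¹ • (w * y - z * x)
def cm : Cl 4 := (2:ℝ)⁻¹ • (w * z - x * y)

lemma e_sq {n : ℕ} (i : Fin n) : e i * e i = -1 := by
  rw [e, ι_sq_scalar]
  simp [QuadraticMap.weightedSumSquares_apply, Pi.single_apply]

lemma e_swap {n : ℕ} {i j : Fin n} (h : i ≠ j) : e i * e j = -(e j * e i) := by
  have hh := ι_mul_ι_add_swap (Q := Qneg n) (Pi.single i 1) (Pi.single j 1)
  have hp : QuadraticMap.polar ⇑(Qneg n) (Pi.single i 1) (Pi.single j 1) = 0 := by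
    simp only [QuadraticMap.polar, QuadraticMap.weightedSumSquares_apply]
    rw [← Finset.sum_sub_distrib, ← Finset.sum_sub_distrib]
    apply Finset.sum_eq_zero; intro k _
    simp only [Pi.add_apply, Pi.single_apply, smul_eq_mul]
    split_ifs with h1 h2 <;> simp_all
  rw [hp, map_zero] at hh
  rw [e, e, eq_neg_iff_add_eq_zero, hh]

lemma e_sq' {n : ℕ} (i : Fin n) (a : Cl n) : e i * (e i * a) = -a := by
  rw [← mul_assoc, e_sq, neg_one_mul]

lemma e_swap' {n : ℕ} {i j : Fin n} (h : i ≠ j) (a : Cl n) :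
    e i * (e j * a) = -(e j * (e i * a)) := by
  rw [← mul_assoc, e_swap h, neg_mul, mul_assoc]

theorem stmt_3 :
    am * am = (2:ℝ)⁻¹ • (-θ - 1) ∧ bm * bm = (2:ℝ)⁻¹ • (-θ - 1) ∧
    cm * cm = (2:ℝ)⁻¹ • (-θ - 1) := by
  have sxw : ∀ a, x * (w * a) = -(w * (x * a)) := e_swap' (by decide)
  have syw : ∀ a, y * (w * a) = -(w * (y * a)) := e_swap' (by decide)
  have szw : ∀ a, z * (w * a) = -(w * (z * a)) := e_swap' (by decide)
  have syx : ∀ a, y * (x * a) = -(x * (y * a)) := e_swap' (by decide)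
  have szx : ∀ a, z * (x * a) = -(x * (z * a)) := e_swap' (by decide)
  have szy : ∀ a, z * (y * a) = -(y * (z * a)) := e_swap' (by decide)
  have sw : ∀ a : Cl 4, w * (w * a) = -a := e_sq' 0
  have sx : ∀ a : Cl 4, x * (x * a) = -a := e_sq' 1
  have sy : ∀ a : Cl 4, y * (y * a) = -a := e_sq' 2
  have sz : ∀ a : Cl 4, z * (z * a) = -a := e_sq' 3
  have qw : w * w = -1 := e_sq 0
  have qx : x * x = -1 := e_sq 1
  have qy : y * y = -1 := e_sq 2
  have qz : z * z = -1 := e_sq 3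
  have h1 : x * w = -(w * x) := e_swap (by decide)
  have h2 : y * w = -(w * y) := e_swap (by decide)
  have h3 : z * w = -(w * z) := e_swap (by decide)
  have h4 : y * x = -(x * y) := e_swap (by decide)
  have h5 : z * x = -(x * z) := e_swap (by decide)
  have h6 : z * y = -(y * z) := e_swap (by decide)
  refine ⟨?_, ?_, ?_⟩ <;>
  · simp only [am, bm, cm, θ, smul_mul_smul_comm]
    simp only [mul_sub, sub_mul, mul_assoc, mul_neg, neg_mul, neg_neg,
      sxw, syw, szw, syx, szx, szy, h1, h2, h3, h4, h5, h6,
      sw, sx, sy, sz, qw, qx, qy, qz, mul_one, smul_sub, smul_neg, smul_smul]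
    module
end
end

section
/- The element 1 does not belong to the left ideal of Cliff(4) generated by {a₋, b₋, c₋}; in particular this left ideal is proper. -/
noncomputable section
open CliffordAlgebra
namespace Aux

lemma qneg_single {n : ℕ} (i : Fin n) : Qneg n (Pi.single i 1) = -1 := by
  simp [QuadraticMap.weightedSumSquares_apply, Pi.single_apply]

lemma e_sq {n : ℕ} (i : Fin n) : e i * e i = -1 := by
  rw [e, ι_sq_scalar, qneg_single, map_neg, map_one]

lemma polar_single {n : ℕ} {i j : Fin n} (h : i ≠ j) :
    QuadraticMap.polar (Qneg n) (Pi.single i 1) (Pi.single j 1) = 0 := by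
  simp only [QuadraticMap.polar, QuadraticMap.weightedSumSquares_apply, Pi.add_apply]
  rw [← Finset.sum_sub_distrib, ← Finset.sum_sub_distrib]
  apply Finset.sum_eq_zero
  intro k _
  rcases eq_or_ne k i with rfl|hi <;> rcases eq_or_ne k j with rfl|hj <;>
    simp_all [Pi.single_apply]

lemma e_anticomm {n : ℕ} {i j : Fin n} (h : i ≠ j) : e j * e i = -(e i * e j) := by
  have h2 := ι_mul_ι_add_swap (Q := Qneg n) (Pi.single i 1) (Pi.single j 1)
  rw [polar_single h, map_zero] at h2
  rw [e, e]
  linear_combination (norm := noncomm_ring) h2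

-- squares
lemma ww : w * w = -1 := e_sq 0
lemma xx : x * x = -1 := e_sq 1
lemma yy : y * y = -1 := e_sq 2
lemma zz : z * z = -1 := e_sq 3
lemma ww' (t : Cl 4) : w * (w * t) = -t := by rw [← mul_assoc, ww, neg_mul, one_mul]
lemma xx' (t : Cl 4) : x * (x * t) = -t := by rw [← mul_assoc, xx, neg_mul, one_mul]
lemma yy' (t : Cl 4) : y * (y * t) = -t := by rw [← mul_assoc, yy, neg_mul, one_mul]
lemma zz' (t : Cl 4) : z * (z * t) = -t := by rw [← mul_assoc, zz, neg_mul, one_mul]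
-- swaps
lemma xw : x * w = -(w * x) := e_anticomm (by decide)
lemma yw : y * w = -(w * y) := e_anticomm (by decide)
lemma zw : z * w = -(w * z) := e_anticomm (by decide)
lemma yx : y * x = -(x * y) := e_anticomm (by decide)
lemma zx : z * x = -(x * z) := e_anticomm (by decide)
lemma zy : z * y = -(y * z) := e_anticomm (by decide)
lemma xw' (t : Cl 4) : x * (w * t) = -(w * (x * t)) := by
  rw [← mul_assoc, xw, neg_mul, mul_assoc]
lemma yw' (t : Cl 4) : y * (w * t) = -(w * (y * t)) := by
  rw [← mul_assoc, yw, neg_mul, mul_assoc]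
lemma zw' (t : Cl 4) : z * (w * t) = -(w * (z * t)) := by
  rw [← mul_assoc, zw, neg_mul, mul_assoc]
lemma yx' (t : Cl 4) : y * (x * t) = -(x * (y * t)) := by
  rw [← mul_assoc, yx, neg_mul, mul_assoc]
lemma zx' (t : Cl 4) : z * (x * t) = -(x * (z * t)) := by
  rw [← mul_assoc, zx, neg_mul, mul_assoc]
lemma zy' (t : Cl 4) : z * (y * t) = -(y * (z * t)) := by
  rw [← mul_assoc, zy, neg_mul, mul_assoc]

lemma am_theta : am * θ = am := by
  rw [am, θ, smul_mul_assoc]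
  congr 1
  rw [sub_mul]
  simp only [mul_assoc, ww, xx, yy, zz, ww', xx', yy', zz', xw, yw, zw, yx, zx, zy,
    xw', yw', zw', yx', zx', zy', mul_neg, neg_mul, neg_neg, mul_one, one_mul]
  abel

lemma bm_theta : bm * θ = bm := by
  rw [bm, θ, smul_mul_assoc]
  congr 1
  rw [sub_mul]
  simp only [mul_assoc, ww, xx, yy, zz, ww', xx', yy', zz', xw, yw, zw, yx, zx, zy,
    xw', yw', zw', yx', zx', zy', mul_neg, neg_mul, neg_neg, mul_one, one_mul]
  abel

lemma cm_theta : cm * θ = cm := by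
  rw [cm, θ, smul_mul_assoc]
  congr 1
  rw [sub_mul]
  simp only [mul_assoc, ww, xx, yy, zz, ww', xx', yy', zz', xw, yw, zw, yx, zx, zy,
    xw', yw', zw', yx', zx', zy', mul_neg, neg_mul, neg_neg, mul_one, one_mul]
  abel

/-- The linear map negating the 0-th coordinate. -/
def L : (Fin 4 → ℝ) →ₗ[ℝ] (Fin 4 → ℝ) where
  toFun v := fun i => if i = 0 then -v i else v i
  map_add' v₁ v₂ := by funext i; by_cases h : i = 0 <;> simp [h] <;> ring
  map_smul' c v := by funext i; by_cases h : i = 0 <;> simp [h]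

lemma Q_L (v : Fin 4 → ℝ) : Qneg 4 (L v) = Qneg 4 v := by
  simp only [QuadraticMap.weightedSumSquares_apply]
  apply Finset.sum_congr rfl
  intro i _
  by_cases h : i = 0 <;> simp [L, h] <;> ring

/-- The algebra automorphism negating the first generator. -/
def σ : Cl 4 →ₐ[ℝ] Cl 4 :=
  lift (Qneg 4) ⟨(ι (Qneg 4)).comp L, fun v => by
    rw [LinearMap.comp_apply, ι_sq_scalar, Q_L]⟩

lemma σ_w : σ w = -w := by
  rw [w, e, σ, lift_ι_apply, LinearMap.comp_apply]
  have : L (Pi.single 0 1) = -Pi.single 0 1 := by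
    funext i; by_cases h : i = 0 <;> simp [L, h, Pi.single_apply]
  rw [this, map_neg]

lemma σ_e {i : Fin 4} (h : i ≠ 0) : σ (e i) = e i := by
  rw [e, σ, lift_ι_apply, LinearMap.comp_apply]
  have : L (Pi.single i 1) = Pi.single i 1 := by
    funext j
    by_cases hj : j = 0
    · subst hj; simp [L, Pi.single_apply, Ne.symm h]
    · simp [L, hj]
  rw [this]

lemma σ_θ : σ θ = -θ := by
  rw [θ, map_mul, map_mul, map_mul, σ_w, x, y, z, σ_e (by decide), σ_e (by decide),
    σ_e (by decide), ← x, ← y, ← z]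
  simp only [neg_mul]

lemma algebraMap_inj : Function.Injective (algebraMap ℝ (Cl 4)) := by
  intro r s h
  have h2 := congrArg (equivExterior (Qneg 4)) h
  rw [equivExterior, changeFormEquiv_apply, changeFormEquiv_apply,
    changeForm_algebraMap, changeForm_algebraMap] at h2
  exact (ExteriorAlgebra.algebraMap_inj _ _ _).mp h2

lemma theta_ne_one : θ ≠ 1 := by
  intro h
  have h1 : σ θ = 1 := by rw [h, map_one]
  rw [σ_θ, h] at h1
  have h2 : algebraMap ℝ (Cl 4) (-1) = algebraMap ℝ (Cl 4) 1 := by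
    rw [map_neg, map_one]; exact h1
  have := algebraMap_inj h2
  norm_num at this

end Aux

theorem stmt_7 :
    (1 : Cl 4) ∉ Submodule.span (Cl 4) ({am, bm, cm} : Set (Cl 4)) ∧
    Submodule.span (Cl 4) ({am, bm, cm} : Set (Cl 4)) ≠ ⊤ := by
  have hmem : (1 : Cl 4) ∉ Submodule.span (Cl 4) ({am, bm, cm} : Set (Cl 4)) := by
    intro hm
    rw [Submodule.mem_span_insert] at hm
    obtain ⟨r, u, hu, h1⟩ := hm
    rw [Submodule.mem_span_insert] at hu
    obtain ⟨s, v, hv, h2⟩ := hu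
    rw [Submodule.mem_span_singleton] at hv
    obtain ⟨t, rfl⟩ := hv
    subst h2
    have key : θ = 1 := by
      calc θ = 1 * θ := (one_mul θ).symm
        _ = (r • am + (s • bm + t • cm)) * θ := by rw [← h1]
        _ = r • (am * θ) + (s • (bm * θ) + t • (cm * θ)) := by
              simp only [smul_eq_mul, add_mul, mul_assoc]
        _ = r • am + (s • bm + t • cm) := by
              rw [Aux.am_theta, Aux.bm_theta, Aux.cm_theta]
        _ = 1 := h1.symm
    exact Aux.theta_ne_one key
  refine ⟨hmem, fun h => hmem ?_⟩
  rw [h]; trivial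
end
end
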